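/- For every ρ = (a,b,c,d) ∈ ℝ⁴ with b ≠ 0 there exists an integer N such that the two vectors β₁ = (N,0,1,0) and β₂ = (N,0,0,-1) in ℤ⁴ satisfy: B(β₁,β₁) = 0 and B(β₂,β₂) = 0 (both are isotropic), B(ρ,β₁) and B(ρ,β₂) are both strictly positive or both strictly negative (they lie strictly on the same side of the hyperplane B(ρ,·) = 0), and their sum β₁ + β₂ has norm B(β₁+β₂, β₁+β₂) = 2, i.e. is a lattice root of Γ^{2,2}. -/
import Mathlib


/-- The bilinear form of the even self-dual lattice `Γ^{2,2}`:
`B(x,y) = -(x₁y₂ + x₂y₁) - (x₃y₄ + x₄y₃)`. -/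
def GammaB (x y : Fin 4 → ℤ) : ℤ :=
  -(x 0 * y 1 + x 1 * y 0) - (x 2 * y 3 + x 3 * y 2)

/-- The bilinear form of `Γ^{2,2}` extended ℝ-bilinearly to `ℝ⁴`. -/
def GammaBR (x y : Fin 4 → ℝ) : ℝ :=
  -(x 0 * y 1 + x 1 * y 0) - (x 2 * y 3 + x 3 * y 2)

/-- For every `ρ = (a,b,c,d) ∈ ℝ⁴` with `b ≠ 0` there is an integer `N` such
that `β₁ = (N,0,1,0)` and `β₂ = (N,0,0,-1)` are isotropic, lie strictly on the
same side of the hyperplane `B(ρ,·) = 0`, and their sum has norm `2`, i.e. is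
a lattice root of `Γ^{2,2}`. -/
theorem isotropic_pair_same_side_sums_to_real_root
    (a b c d : ℝ) (hb : b ≠ 0) :
    ∃ N : ℤ,
      GammaB ![N, 0, 1, 0] ![N, 0, 1, 0] = 0 ∧
      GammaB ![N, 0, 0, -1] ![N, 0, 0, -1] = 0 ∧
      ((0 < GammaBR ![a, b, c, d] ![(N : ℝ), 0, 1, 0] ∧
          0 < GammaBR ![a, b, c, d] ![(N : ℝ), 0, 0, -1]) ∨
        (GammaBR ![a, b, c, d] ![(N : ℝ), 0, 1, 0] < 0 ∧
          GammaBR ![a, b, c, d] ![(N : ℝ), 0, 0, -1] < 0)) ∧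
      GammaB (![N, 0, 1, 0] + ![N, 0, 0, -1])
        (![N, 0, 1, 0] + ![N, 0, 0, -1]) = 2 := by
  have hab : (0:ℝ) < |b| := abs_pos.mpr hb
  set M : ℤ := ⌈(|c| + |d| + 1) / |b|⌉ with hM
  refine ⟨if 0 < b then -M else M, ?_, ?_, ?_, ?_⟩
  · simp [GammaB]
  · simp [GammaB]
  · have hMb : |c| + |d| + 1 ≤ |b| * (M : ℝ) := by
      rw [mul_comm, ← div_le_iff₀ hab]
      exact Int.le_ceil _
    have key : ∀ x : ℝ, |x| ≤ |c| + |d| → 0 < -(b * ((if 0 < b then -M else M : ℤ) : ℝ)) + x := by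
      intro x hx
      have hbn : b * ((if 0 < b then -M else M : ℤ) : ℝ) = -(|b| * (M:ℝ)) := by
        rcases lt_or_gt_of_ne hb with h | h
        · rw [if_neg (not_lt.mpr h.le), abs_of_neg h]; ring
        · rw [if_pos h, abs_of_pos h]; push_cast; ring
      rw [hbn]
      have := neg_abs_le x
      linarith
    left
    constructor
    · have := key (-d) (by rw [abs_neg]; linarith [abs_nonneg c])
      simp only [GammaBR]
      simp only [Matrix.cons_val_zero, Matrix.cons_val_one, Matrix.head_cons,
        Matrix.cons_val_two, Matrix.tail_cons, Matrix.cons_val_three]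
      nlinarith [this]
    · have := key c (by linarith [abs_nonneg d])
      simp only [GammaBR]
      simp only [Matrix.cons_val_zero, Matrix.cons_val_one, Matrix.head_cons,
        Matrix.cons_val_two, Matrix.tail_cons, Matrix.cons_val_three]
      nlinarith [this]
  · simp [GammaB, Matrix.cons_val_zero, Matrix.cons_val_one]
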